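/- arXiv:2411.11403 — 3 statements merged into one kernel-verified Lean document; each statement's English description precedes it below -/
import Mathlib

section
/- For all a > 0 and z ∈ ℝ, exp(-a|z|) = (a/√(2π)) ∫₀^∞ η^{-1/2} exp(-z²/(2η) - a²η/2) dη. -/
/-!
Substituting `η = t²` and completing the square,
`z² / (2t²) + a²t² / 2 = a|z| + (a t - |z| / t)² / 2`, reduces the integral to
`2 e^{-a|z|} ∫₀^∞ exp(-(a t - |z|/t)² / 2) dt`. By the Cauchy–Schlömilch substitution
`u = a t - c / t` (with `c > 0`; the case `c = 0` is a plain rescaling), whose weight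
`a + c / t²` splits into two halves exchanged by the involution `t ↦ c / (a t)`, this last
integral equals `(2a)⁻¹ ∫_ℝ e^{-u²/2} du = √(2π) / (2a)`.
-/

open MeasureTheory Set Real

theorem integral_Ioi_comp_div {E : Type*} [NormedAddCommGroup E] [NormedSpace ℝ E]
    (f : ℝ → E) {k : ℝ} (hk : 0 < k) :
    ∫ s in Ioi 0, (k / s ^ 2) • f (k / s) = ∫ t in Ioi 0, f t := by
  have hderiv : ∀ s ∈ Ioi (0 : ℝ), HasDerivWithinAt (k / ·) (-(k / s ^ 2)) (Ioi 0) s := by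
    intro s hs
    simpa [div_eq_mul_inv] using ((hasDerivAt_inv (ne_of_gt hs)).const_mul k).hasDerivWithinAt
  have hinj : InjOn (k / ·) (Ioi (0 : ℝ)) := fun x _ y _ h =>
    inv_injective (mul_left_cancel₀ hk.ne' (by simpa only [div_eq_mul_inv] using h))
  have himage : (k / ·) '' Ioi (0 : ℝ) = Ioi 0 := by
    refine Subset.antisymm (image_subset_iff.2 fun s hs => div_pos hk hs) fun t ht => ?_
    exact ⟨k / t, div_pos hk ht, div_div_cancel₀ hk.ne'⟩
  conv_rhs =>
    rw [← himage, integral_image_eq_integral_abs_deriv_smul measurableSet_Ioi hderiv hinj]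
  refine setIntegral_congr_fun measurableSet_Ioi fun s hs => ?_
  rw [abs_neg, abs_of_pos (div_pos hk (pow_pos hs 2))]

theorem hasDerivAt_mul_sub_div (a c : ℝ) {t : ℝ} (ht : t ≠ 0) :
    HasDerivAt (fun t => a * t - c / t) (a + c / t ^ 2) t := by
  have := ((hasDerivAt_id' t).const_mul a).sub ((hasDerivAt_inv ht).const_mul c)
  simp only [← div_eq_mul_inv, mul_one, mul_neg, sub_neg_eq_add] at this
  exact this

theorem strictMonoOn_mul_sub_div {a c : ℝ} (ha : 0 < a) (hc : 0 ≤ c) :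
    StrictMonoOn (fun t => a * t - c / t) (Ioi 0) := fun x hx y _ hxy => by
  have : c / y ≤ c / x := div_le_div_of_nonneg_left hc hx hxy.le
  simp only
  nlinarith

theorem image_mul_sub_div_Ioi {a c : ℝ} (ha : 0 < a) (hc : 0 < c) :
    (fun t => a * t - c / t) '' Ioi 0 = univ := by
  refine eq_univ_of_forall fun u => ?_
  -- the positive root of `a t² - u t - c = 0`
  set s := √(u ^ 2 + 4 * a * c)
  have hs : s ^ 2 = u ^ 2 + 4 * a * c := sq_sqrt (by positivity)
  have hus : 0 < u + s := by
    have : |u| < s := by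
      rw [← sqrt_sq_eq_abs]; exact sqrt_lt_sqrt (sq_nonneg u) (by nlinarith)
    linarith [neg_abs_le u]
  refine ⟨(u + s) / (2 * a), div_pos hus (by positivity), ?_⟩
  field_simp
  linear_combination hs

theorem mul_sub_div_comp_div {a c t : ℝ} (ha : a ≠ 0) (hc : c ≠ 0) (ht : t ≠ 0) :
    a * (c / a / t) - c / (c / a / t) = -(a * t - c / t) := by
  field_simp
  ring

theorem integral_Ioi_comp_mul_sub_div_of_pos {g : ℝ → ℝ} (hg : Function.Even g)
    (hgi : Integrable g) {a c : ℝ} (ha : 0 < a) (hc : 0 < c) :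
    ∫ t in Ioi 0, g (a * t - c / t) = (2 * a)⁻¹ * ∫ u, g u := by
  set φ : ℝ → ℝ := fun t => a * t - c / t
  have hφ' : ∀ t ∈ Ioi (0 : ℝ), HasDerivWithinAt φ (a + c / t ^ 2) (Ioi 0) t :=
    fun t ht => (hasDerivAt_mul_sub_div a c (ne_of_gt ht)).hasDerivWithinAt
  have hinj : InjOn φ (Ioi 0) := (strictMonoOn_mul_sub_div ha hc.le).injOn
  have hweight : ∀ t ∈ Ioi (0 : ℝ), |a + c / t ^ 2| • g (φ t) = (a + c / t ^ 2) * g (φ t) :=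
    fun t _ => by rw [smul_eq_mul, abs_of_pos (by positivity)]
  have hsum_int : IntegrableOn (fun t => (a + c / t ^ 2) * g (φ t)) (Ioi 0) := by
    refine ((integrableOn_image_iff_integrableOn_abs_deriv_smul measurableSet_Ioi hφ' hinj g).1
      ?_).congr_fun hweight measurableSet_Ioi
    rw [image_mul_sub_div_Ioi ha hc]
    exact hgi.integrableOn
  have hsum : ∫ u, g u = ∫ t in Ioi 0, (a + c / t ^ 2) * g (φ t) := by
    rw [← setIntegral_univ, ← image_mul_sub_div_Ioi ha hc,
      integral_image_eq_integral_abs_deriv_smul measurableSet_Ioi hφ' hinj,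
      setIntegral_congr_fun measurableSet_Ioi hweight]
  have hleft_int : IntegrableOn (fun t => a * g (φ t)) (Ioi 0) := by
    refine IntegrableOn.congr_fun (hsum_int.bdd_mul (c := 1)
      (by fun_prop : Measurable fun t : ℝ => a / (a + c / t ^ 2)).aestronglyMeasurable
      (ae_of_all _ fun t => ?_)) (fun t _ => ?_) measurableSet_Ioi
    · rw [norm_div, Real.norm_of_nonneg ha.le, Real.norm_of_nonneg (by positivity)]
      exact div_le_one_of_le₀ (by simp only [le_add_iff_nonneg_right]; positivity) (by positivity)
    · field_simp
  have hswap : ∫ t in Ioi 0, c / t ^ 2 * g (φ t) = ∫ t in Ioi 0, a * g (φ t) := by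
    rw [← integral_Ioi_comp_div _ (div_pos hc ha)]
    refine setIntegral_congr_fun measurableSet_Ioi fun t (ht : 0 < t) => ?_
    simp only [φ, smul_eq_mul, mul_sub_div_comp_div ha.ne' hc.ne' ht.ne', hg _]
    generalize g _ = y
    field_simp
  have hright_int : IntegrableOn (fun t => c / t ^ 2 * g (φ t)) (Ioi 0) :=
    (hsum_int.sub hleft_int).congr_fun (fun t _ => by simp only [Pi.sub_apply]; ring)
      measurableSet_Ioi
  have hsplit : ∫ t in Ioi 0, (a + c / t ^ 2) * g (φ t) = 2 * a * ∫ t in Ioi 0, g (φ t) := by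
    simp only [add_mul]
    rw [integral_add hleft_int hright_int, hswap, integral_const_mul]
    ring
  rw [hsum, hsplit, ← mul_assoc, inv_mul_cancel₀ (by positivity), one_mul]

theorem integral_Ioi_comp_mul_sub_div {g : ℝ → ℝ} (hg : Function.Even g)
    (hgi : Integrable g) {a c : ℝ} (ha : 0 < a) (hc : 0 ≤ c) :
    ∫ t in Ioi 0, g (a * t - c / t) = (2 * a)⁻¹ * ∫ u, g u := by
  rcases hc.eq_or_lt with rfl | hc
  · have hhalf : ∫ u, g u = 2 * ∫ u in Ioi 0, g u := by
      rw [← integral_comp_abs]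
      congr with u
      rcases abs_choice u with h | h <;> simp only [h, hg u]
    simp only [zero_div, sub_zero]
    rw [integral_comp_mul_left_Ioi g 0 ha, mul_zero, hhalf, smul_eq_mul]
    ring
  · exact integral_Ioi_comp_mul_sub_div_of_pos hg hgi ha hc

theorem integral_Ioi_exp_neg_sq_mul_sub_div {a c : ℝ} (ha : 0 < a) (hc : 0 ≤ c) :
    ∫ t in Ioi 0, exp (-(a * t - c / t) ^ 2 / 2) = √(2 * π) / (2 * a) := by
  have hgauss : (fun u : ℝ => exp (-u ^ 2 / 2)) = fun u => exp (-(1 / 2) * u ^ 2) := by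
    ext u; ring_nf
  have heven : Function.Even fun u : ℝ => exp (-u ^ 2 / 2) := fun u => by simp only [neg_sq]
  have hint : Integrable fun u : ℝ => exp (-u ^ 2 / 2) := by
    rw [hgauss]; exact integrable_exp_neg_mul_sq one_half_pos
  rw [integral_Ioi_comp_mul_sub_div heven hint ha hc, hgauss, integral_gaussian, one_div,
    div_inv_eq_mul, mul_comm π, inv_mul_eq_div]

/-- Scale-mixture-of-Gaussians representation of the Laplace density. -/
theorem laplace_gaussian_mixture (a z : ℝ) (ha : 0 < a) :
    Real.exp (-(a * |z|)) =
      a / Real.sqrt (2 * Real.pi) *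
        ∫ η in Set.Ioi (0 : ℝ),
          η ^ (-(1 / 2) : ℝ) * Real.exp (-(z ^ 2 / (2 * η)) - a ^ 2 * η / 2) := by
  have hintegrand : ∀ t ∈ Ioi (0 : ℝ),
      (|(2 : ℝ)| * t ^ ((2 : ℝ) - 1)) • ((t ^ (2 : ℝ)) ^ (-(1 / 2) : ℝ) *
        exp (-(z ^ 2 / (2 * t ^ (2 : ℝ))) - a ^ 2 * t ^ (2 : ℝ) / 2)) =
      2 * exp (-(a * |z|)) * exp (-(a * t - |z| / t) ^ 2 / 2) := by
    intro t (ht : 0 < t)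
    have hsqrt : (t ^ 2) ^ (-(1 / 2) : ℝ) = t⁻¹ := by
      rw [← rpow_natCast, ← rpow_mul ht.le]; norm_num [rpow_neg_one]
    have hexp : -(z ^ 2 / (2 * t ^ 2)) - a ^ 2 * t ^ 2 / 2 =
        -(a * |z|) + -(a * t - |z| / t) ^ 2 / 2 := by
      rw [← sq_abs z]; field_simp; ring
    rw [show (2 : ℝ) - 1 = 1 by norm_num, rpow_one, rpow_two, hsqrt, hexp, exp_add, smul_eq_mul,
      abs_two]
    field_simp
  rw [← integral_comp_rpow_Ioi _ two_ne_zero, setIntegral_congr_fun measurableSet_Ioi hintegrand,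
    integral_const_mul, integral_Ioi_exp_neg_sq_mul_sub_div ha (abs_nonneg z)]
  field_simp
end

section
/- Let β, λ > 0 and let G : ℝᵈ → ℝ be measurable and bounded below. Define π(u,v) = (1/Z_π) (∏ᵢ uᵢ) exp(-β(½λ‖(u,v)‖² + G(u ⊙ v))) on X = (0,∞)ᵈ × ℝᵈ and ρ(x) = (1/Z) exp(-β(λ‖x‖₁ + G(x))) on ℝᵈ. Then for every bounded measurable φ : ℝᵈ → ℝ, ∫_X φ(u ⊙ v) π(u,v) du dv = ∫_{ℝᵈ} φ(x) ρ(x) dx; i.e., if (u,v) ∼ π then u ⊙ v ∼ ρ. -/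
/-!
Write `a = βλ/2`. For fixed `u` with positive entries the substitution `x = u ⊙ v` has Jacobian
`∏ uᵢ`, exactly the weight in `π`, and `G` only sees `u ⊙ v`; so integrating out `u` (Tonelli)
leaves, for each coordinate, the integral
`∫₀^∞ exp(-a (t² + xᵢ² / t²)) dt = (√(π / a) / 2) exp(-2a |xᵢ|)`,
which the Cauchy–Schlömilch substitution `s = t - |xᵢ| / t` reduces to a Gaussian integral.
Hence the push-forward of the unnormalized `π` under `(u, v) ↦ u ⊙ v` is `(√(π / a) / 2)ᵈ` times
the unnormalized `ρ`; the same constant relates `Z_π` and `Z`, so it cancels.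
-/

open MeasureTheory Set Real
open scoped ENNReal

theorem lintegral_fin_nat_prod_eq_prod {n : ℕ} {E : Fin n → Type*}
    {mE : ∀ i, MeasurableSpace (E i)} {μ : (i : Fin n) → Measure (E i)}
    [∀ i, SigmaFinite (μ i)] {f : (i : Fin n) → E i → ℝ≥0∞} (hf : ∀ i, Measurable (f i)) :
    ∫⁻ x, ∏ i, f i (x i) ∂(Measure.pi μ) = ∏ i, ∫⁻ x, f i x ∂(μ i) := by
  induction n with
  | zero => simp
  | succ n ih =>
      rw [← ((measurePreserving_piFinSuccAbove μ 0).symm).lintegral_comp_emb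
            (MeasurableEquiv.measurableEmbedding _), Fin.prod_univ_succ,
            ← ih (fun i => hf i.succ)]
      refine (lintegral_congr fun a => ?_).trans (lintegral_prod_mul
        (ν := Measure.pi fun i : Fin n => μ i.succ) (f := f 0)
        (g := fun y : ∀ i : Fin n, E i.succ => ∏ i, f i.succ (y i)) (hf 0).aemeasurable
        (Finset.aemeasurable_fun_prod _ fun i _ =>
          ((hf i.succ).comp (measurable_pi_apply i)).aemeasurable))
      rw [Fin.prod_univ_succ]
      rfl

theorem lintegral_fintype_prod_eq_prod {ι : Type*} [Fintype ι] {E : ι → Type*}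
    {mE : ∀ i, MeasurableSpace (E i)} {μ : (i : ι) → Measure (E i)}
    [∀ i, SigmaFinite (μ i)] {f : (i : ι) → E i → ℝ≥0∞} (hf : ∀ i, Measurable (f i)) :
    ∫⁻ x, ∏ i, f i (x i) ∂(Measure.pi μ) = ∏ i, ∫⁻ x, f i x ∂(μ i) := by
  let e := (Fintype.equivFin ι).symm
  rw [← (measurePreserving_piCongrLeft _ e).lintegral_comp_emb
    (MeasurableEquiv.measurableEmbedding _)]
  simp_rw [← e.prod_comp, MeasurableEquiv.coe_piCongrLeft, Equiv.piCongrLeft_apply_apply]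
  exact lintegral_fin_nat_prod_eq_prod fun i => hf (e i)

theorem integral_withDensity_ofReal {X E : Type*} [MeasurableSpace X] [NormedAddCommGroup E]
    [NormedSpace ℝ E] {μ : Measure X} {h : X → ℝ} (hm : Measurable h) (h0 : 0 ≤ᵐ[μ] h)
    (g : X → E) :
    ∫ x, g x ∂μ.withDensity (fun x => ENNReal.ofReal (h x)) = ∫ x, h x • g x ∂μ := by
  rw [integral_withDensity_eq_integral_toReal_smul hm.ennreal_ofReal
    (ae_of_all _ fun _ => ENNReal.ofReal_lt_top)]
  exact integral_congr_ae (h0.mono fun x hx => by simp [ENNReal.toReal_ofReal hx])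

theorem hasDerivAt_const_div {b t : ℝ} (ht : t ≠ 0) :
    HasDerivAt (fun t => b / t) (-(b / t ^ 2)) t := by
  simpa [div_eq_mul_inv] using (hasDerivAt_inv ht).const_mul b

theorem lintegral_Ioi_comp_div {b : ℝ} (hb : 0 < b) (f : ℝ → ℝ≥0∞) :
    ∫⁻ t in Ioi 0, ENNReal.ofReal (b / t ^ 2) * f (b / t) = ∫⁻ t in Ioi 0, f t := by
  have hinj : InjOn (fun t => b / t) (Ioi 0) := fun x hx y hy hxy => by
    have := hb.ne'
    simp_all [div_eq_div_iff (ne_of_gt hx) (ne_of_gt (show 0 < y from hy))]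
  have himage : (fun t => b / t) '' Ioi 0 = Ioi 0 := by
    refine (image_subset_iff.2 fun t ht => div_pos hb ht).antisymm fun s hs => ?_
    exact ⟨b / s, div_pos hb hs, div_div_cancel₀ hb.ne'⟩
  conv_rhs => rw [← himage]
  rw [lintegral_image_eq_lintegral_abs_deriv_mul measurableSet_Ioi
    (fun t ht => (hasDerivAt_const_div (ne_of_gt ht)).hasDerivWithinAt) hinj]
  simp only [abs_neg, abs_div, abs_of_pos hb, abs_sq]

theorem lintegral_Ioi_comp_sub_div {b : ℝ} (hb : 0 < b) (f : ℝ → ℝ≥0∞) :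
    ∫⁻ t in Ioi 0, ENNReal.ofReal (1 + b / t ^ 2) * f (t - b / t) = ∫⁻ s, f s := by
  have hderiv : ∀ t ∈ Ioi (0 : ℝ),
      HasDerivWithinAt (fun t => t - b / t) (1 + b / t ^ 2) (Ioi 0) t := fun t ht => by
    simpa only [sub_neg_eq_add] using
      ((hasDerivAt_id' t).fun_sub (hasDerivAt_const_div (ne_of_gt ht))).hasDerivWithinAt
  have hinj : InjOn (fun t => t - b / t) (Ioi 0) := fun x hx y hy hxy => by
    have hx : 0 < x := hx
    have hy : 0 < y := hy
    have hxy : x - b / x = y - b / y := hxy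
    field_simp at hxy
    nlinarith [mul_pos hx hy]
  have himage : (fun t => t - b / t) '' Ioi 0 = univ := by
    refine eq_univ_of_forall fun s => ?_
    -- the positive root of `t ^ 2 - s t - b`
    have hs : 0 ≤ s ^ 2 + 4 * b := by positivity
    have hroot : 0 < s + √(s ^ 2 + 4 * b) := by
      have := sqrt_lt_sqrt (sq_nonneg s) (by linarith : s ^ 2 < s ^ 2 + 4 * b)
      rw [sqrt_sq_eq_abs] at this
      linarith [neg_abs_le s]
    refine ⟨(s + √(s ^ 2 + 4 * b)) / 2, div_pos hroot two_pos, ?_⟩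
    field_simp
    nlinarith [sq_sqrt hs]
  conv_rhs => rw [← setLIntegral_univ, ← himage]
  rw [lintegral_image_eq_lintegral_abs_deriv_mul measurableSet_Ioi hderiv hinj]
  refine setLIntegral_congr_fun measurableSet_Ioi fun t ht => ?_
  rw [abs_of_pos (by have : 0 < t := ht; positivity)]

theorem lintegral_exp_neg_mul_sq {a : ℝ} (ha : 0 < a) :
    ∫⁻ s, ENNReal.ofReal (exp (-(a * s ^ 2))) = ENNReal.ofReal √(π / a) := by
  rw [← integral_gaussian, ofReal_integral_eq_lintegral_ofReal (integrable_exp_neg_mul_sq ha)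
    (ae_of_all _ fun _ => (exp_pos _).le)]
  simp only [neg_mul]

theorem lintegral_Ioi_exp_neg_mul_sq_add_div_sq {a b : ℝ} (ha : 0 < a) (hb : 0 ≤ b) :
    ∫⁻ t in Ioi 0, ENNReal.ofReal (exp (-(a * (t ^ 2 + b ^ 2 / t ^ 2)))) =
      ENNReal.ofReal (√(π / a) / 2 * exp (-(2 * a * b))) := by
  rcases hb.eq_or_lt with rfl | hb
  · simp only [ne_eq, OfNat.ofNat_ne_zero, not_false_eq_true, zero_pow, zero_div, add_zero,
      mul_zero, neg_zero, exp_zero, mul_one]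
    rw [← integral_gaussian_Ioi, ofReal_integral_eq_lintegral_ofReal
      (integrable_exp_neg_mul_sq ha).integrableOn (ae_of_all _ fun _ => (exp_pos _).le)]
    simp only [neg_mul]
  set f : ℝ → ℝ≥0∞ := fun t => ENNReal.ofReal (exp (-(a * (t ^ 2 + b ^ 2 / t ^ 2))))
    with hf
  set I := ∫⁻ t in Ioi 0, f t
  have hinv : ∀ t ∈ Ioi (0 : ℝ), f (b / t) = f t := fun t ht => by
    have : t ≠ 0 := ne_of_gt ht
    simp only [hf]
    congr 4
    field_simp
    ring
  have hshift : ∀ t ∈ Ioi (0 : ℝ),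
      ENNReal.ofReal (exp (-(a * (t - b / t) ^ 2))) = ENNReal.ofReal (exp (2 * a * b)) * f t :=
    fun t ht => by
      have : t ≠ 0 := ne_of_gt ht
      rw [← ENNReal.ofReal_mul (exp_pos _).le, ← exp_add]
      congr 2
      field_simp
      ring
  have key : ENNReal.ofReal √(π / a) = ENNReal.ofReal (exp (2 * a * b)) * (2 * I) := calc
    _ = ∫⁻ s, ENNReal.ofReal (exp (-(a * s ^ 2))) := (lintegral_exp_neg_mul_sq ha).symm
    _ = ∫⁻ t in Ioi 0,
          ENNReal.ofReal (1 + b / t ^ 2) * ENNReal.ofReal (exp (-(a * (t - b / t) ^ 2))) :=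
        (lintegral_Ioi_comp_sub_div hb _).symm
    _ = ENNReal.ofReal (exp (2 * a * b)) *
          ∫⁻ t in Ioi 0, (f t + ENNReal.ofReal (b / t ^ 2) * f (b / t)) := by
        rw [← lintegral_const_mul _ (by fun_prop)]
        refine setLIntegral_congr_fun measurableSet_Ioi fun t ht => ?_
        rw [hshift t ht, hinv t ht, ENNReal.ofReal_add zero_le_one (by positivity),
          ENNReal.ofReal_one]
        ring
    _ = ENNReal.ofReal (exp (2 * a * b)) * (2 * I) := by
        rw [lintegral_add_left (by fun_prop), lintegral_Ioi_comp_div hb, two_mul I]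
  have hcancel :
      ENNReal.ofReal (exp (-(2 * a * b)) / 2) * (ENNReal.ofReal (exp (2 * a * b)) * 2) = 1 := by
    rw [← ENNReal.ofReal_ofNat 2, ← ENNReal.ofReal_mul (by positivity),
      ← ENNReal.ofReal_mul (by positivity), div_mul_eq_mul_div, mul_div_assoc,
      mul_div_cancel_right₀ _ two_ne_zero, ← exp_add, neg_add_cancel, exp_zero,
      ENNReal.ofReal_one]
  calc I = ENNReal.ofReal (exp (-(2 * a * b)) / 2) *
          (ENNReal.ofReal (exp (2 * a * b)) * (2 * I)) := by
        rw [← mul_assoc _ 2, ← mul_assoc, hcancel, one_mul]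
    _ = ENNReal.ofReal (√(π / a) / 2 * exp (-(2 * a * b))) := by
        rw [← key, ← ENNReal.ofReal_mul (by positivity)]
        ring_nf

/-- Up to normalization, the law of `(u, v)` under `π` when `G = 0` and `a = βλ/2`. -/
noncomputable def hadamardGaussian (ι : Type*) [Fintype ι] (a : ℝ) :
    Measure ((ι → ℝ) × (ι → ℝ)) :=
  (volume.restrict {p | ∀ i, 0 < p.1 i}).withDensity fun p =>
    ENNReal.ofReal ((∏ i, p.1 i) * exp (-(a * (∑ i, p.1 i ^ 2 + ∑ i, p.2 i ^ 2))))

noncomputable def laplacePi (ι : Type*) [Fintype ι] (a : ℝ) : Measure (ι → ℝ) :=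
  volume.withDensity fun x => ENNReal.ofReal (exp (-(2 * a * ∑ i, |x i|)))

variable {ι : Type*} [Fintype ι]

theorem lintegral_comp_mul_left_pi {u : ι → ℝ} (hu : ∀ i, u i ≠ 0)
    (g : (ι → ℝ) → ℝ≥0∞) :
    ∫⁻ v, ENNReal.ofReal |∏ i, u i| * g (u * v) = ∫⁻ x, g x := by
  classical
  let L : (ι → ℝ) →L[ℝ] (ι → ℝ) :=
    LinearMap.toContinuousLinearMap (Matrix.toLin' (Matrix.diagonal u))
  have hL : ∀ v, L v = u * v := fun v => funext (Matrix.mulVec_diagonal u v)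
  have hdet : L.det = ∏ i, u i := by
    rw [ContinuousLinearMap.det, LinearMap.coe_toContinuousLinearMap, LinearMap.det_toLin',
      Matrix.det_diagonal]
  have hinj : Function.Injective L := fun v w hvw => by
    ext i
    simpa [hL, hu i] using congrFun hvw i
  have hsurj : Function.Surjective L := fun x =>
    ⟨x / u, by ext i; simp [hL, mul_div_cancel₀ _ (hu i)]⟩
  have := lintegral_image_eq_lintegral_abs_det_fderiv_mul volume MeasurableSet.univ
    (fun v _ => L.hasFDerivAt.hasFDerivWithinAt) hinj.injOn g
  rw [image_univ_of_surjective hsurj, Measure.restrict_univ] at this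
  simpa [hdet, hL] using this.symm

theorem lintegral_pi_Ioi_exp_neg_mul_sq_add_div_sq {a : ℝ} (ha : 0 < a) (x : ι → ℝ) :
    ∫⁻ u in univ.pi fun _ => Ioi 0,
        ∏ i, ENNReal.ofReal (exp (-(a * (u i ^ 2 + x i ^ 2 / u i ^ 2)))) =
      ENNReal.ofReal ((√(π / a) / 2) ^ Fintype.card ι * exp (-(2 * a * ∑ i, |x i|))) := by
  rw [volume_pi, Measure.restrict_pi_pi, lintegral_fintype_prod_eq_prod
    (f := fun i t => ENNReal.ofReal (exp (-(a * (t ^ 2 + x i ^ 2 / t ^ 2))))) fun i => by fun_prop]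
  simp_rw [← sq_abs (x _), lintegral_Ioi_exp_neg_mul_sq_add_div_sq ha (abs_nonneg _)]
  rw [← ENNReal.ofReal_prod_of_nonneg (fun i _ => by positivity), Finset.prod_mul_distrib,
    Finset.prod_const, Finset.card_univ, ← exp_sum, Finset.mul_sum, Finset.sum_neg_distrib]

theorem lintegral_hadamardDensity_comp_mul_left {a : ℝ} {u : ι → ℝ} (hu : ∀ i, 0 < u i)
    (g : (ι → ℝ) → ℝ≥0∞) :
    ∫⁻ v, ENNReal.ofReal ((∏ i, u i) * exp (-(a * (∑ i, u i ^ 2 + ∑ i, v i ^ 2)))) *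
        g (u * v) =
      ∫⁻ x, (∏ i, ENNReal.ofReal (exp (-(a * (u i ^ 2 + x i ^ 2 / u i ^ 2))))) * g x := by
  conv_rhs => rw [← lintegral_comp_mul_left_pi (fun i => (hu i).ne')]
  congr 1 with v
  have hexp : ∏ i, ENNReal.ofReal (exp (-(a * (u i ^ 2 + (u * v) i ^ 2 / u i ^ 2)))) =
      ENNReal.ofReal (exp (-(a * (∑ i, u i ^ 2 + ∑ i, v i ^ 2)))) := by
    rw [← ENNReal.ofReal_prod_of_nonneg (fun i _ => (exp_pos _).le), ← exp_sum,
      ← Finset.sum_add_distrib, Finset.mul_sum, ← Finset.sum_neg_distrib]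
    refine congrArg (ENNReal.ofReal ∘ exp) (Finset.sum_congr rfl fun i _ => ?_)
    rw [Pi.mul_apply, mul_pow, mul_div_cancel_left₀ _ (pow_ne_zero 2 (hu i).ne')]
  rw [hexp, abs_of_pos (Finset.prod_pos fun i _ => hu i),
    ENNReal.ofReal_mul (Finset.prod_nonneg fun i _ => (hu i).le), mul_assoc]

theorem lintegral_comp_mul_hadamardGaussian {a : ℝ} (ha : 0 < a) {g : (ι → ℝ) → ℝ≥0∞}
    (hg : Measurable g) :
    ∫⁻ p, g (p.1 * p.2) ∂hadamardGaussian ι a =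
      ENNReal.ofReal ((√(π / a) / 2) ^ Fintype.card ι) * ∫⁻ x, g x ∂laplacePi ι a := by
  rw [hadamardGaussian, laplacePi, lintegral_withDensity_eq_lintegral_mul _ (by fun_prop)
    (show Measurable fun p : (ι → ℝ) × (ι → ℝ) => g (p.1 * p.2) by fun_prop),
    lintegral_withDensity_eq_lintegral_mul _ (by fun_prop) hg]
  simp only [Pi.mul_apply]
  set P : Set (ι → ℝ) := univ.pi fun _ => Ioi 0
  set K : (ι → ℝ) → (ι → ℝ) → ℝ≥0∞ := fun u x =>
    ∏ i, ENNReal.ofReal (exp (-(a * (u i ^ 2 + x i ^ 2 / u i ^ 2))))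
  have hK : Measurable (Function.uncurry K) := by fun_prop
  have hset : {p : (ι → ℝ) × (ι → ℝ) | ∀ i, 0 < p.1 i} = P ×ˢ univ := by
    ext
    simp [P]
  calc _ = ∫⁻ u in P, ∫⁻ x, K u x * g x := by
        rw [hset, Measure.volume_eq_prod, setLIntegral_prod _ (by fun_prop)]
        simp only [Measure.restrict_univ]
        refine setLIntegral_congr_fun (MeasurableSet.univ_pi fun _ => measurableSet_Ioi)
          fun u hu => lintegral_hadamardDensity_comp_mul_left (by simpa [P] using hu) g
    _ = ∫⁻ x, (∫⁻ u in P, K u x) * g x := by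
        rw [lintegral_lintegral_swap ((hK.mul (hg.comp measurable_snd)).aemeasurable)]
        exact lintegral_congr fun x => lintegral_mul_const _ hK.of_uncurry_right
    _ = _ := by
        simp_rw [K, P, lintegral_pi_Ioi_exp_neg_mul_sq_add_div_sq ha, ENNReal.ofReal_mul
          (by positivity : (0 : ℝ) ≤ (√(π / a) / 2) ^ Fintype.card ι), mul_assoc]
        exact lintegral_const_mul _ (by fun_prop)

theorem map_mul_hadamardGaussian {a : ℝ} (ha : 0 < a) :
    (hadamardGaussian ι a).map (fun p => p.1 * p.2) =
      ENNReal.ofReal ((√(π / a) / 2) ^ Fintype.card ι) • laplacePi ι a :=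
  Measure.ext_of_lintegral _ fun g hg => by
    rw [lintegral_map hg (by fun_prop), lintegral_smul_measure, smul_eq_mul,
      lintegral_comp_mul_hadamardGaussian ha hg]

theorem setIntegral_hadamardDensity_comp_mul {a : ℝ} (ha : 0 < a) {F : (ι → ℝ) → ℝ}
    (hF : Measurable F) :
    ∫ p in {p : (ι → ℝ) × (ι → ℝ) | ∀ i, 0 < p.1 i},
        (∏ i, p.1 i) * exp (-(a * (∑ i, p.1 i ^ 2 + ∑ i, p.2 i ^ 2))) *
          F (fun i => p.1 i * p.2 i) =
      (√(π / a) / 2) ^ Fintype.card ι * ∫ x, exp (-(2 * a * ∑ i, |x i|)) * F x := by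
  have hS : MeasurableSet {p : (ι → ℝ) × (ι → ℝ) | ∀ i, 0 < p.1 i} := by measurability
  have h := congrArg (fun μ => ∫ x, F x ∂μ) (map_mul_hadamardGaussian (ι := ι) ha)
  rw [integral_map (by fun_prop) hF.aestronglyMeasurable, integral_smul_measure,
    ENNReal.toReal_ofReal (by positivity), smul_eq_mul, hadamardGaussian, laplacePi,
    integral_withDensity_ofReal (by fun_prop) ((ae_restrict_mem hS).mono fun p hp =>
      mul_nonneg (Finset.prod_nonneg fun i _ => (hp i).le) (exp_pos _).le),
    integral_withDensity_ofReal (by fun_prop) (ae_of_all _ fun x => (exp_pos _).le)] at h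
  simp only [smul_eq_mul] at h
  exact h

theorem setIntegral_tiltedHadamardDensity_comp_mul {β lam : ℝ} (hβ : 0 < β) (hlam : 0 < lam)
    {G : (ι → ℝ) → ℝ} (hG : Measurable G) {F : (ι → ℝ) → ℝ} (hF : Measurable F) :
    ∫ p in {p : (ι → ℝ) × (ι → ℝ) | ∀ i, 0 < p.1 i},
        F (fun i => p.1 i * p.2 i) * ((∏ i, p.1 i) *
          exp (-β * (lam / 2 * ((∑ i, p.1 i ^ 2) + ∑ i, p.2 i ^ 2) +
            G (fun i => p.1 i * p.2 i)))) =
      (√(π / (β * lam / 2)) / 2) ^ Fintype.card ι *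
        ∫ x, F x * exp (-β * (lam * ∑ i, |x i| + G x)) := by
  set a := β * lam / 2 with ha_def
  have hπ : ∀ u v : ι → ℝ,
      exp (-β * (lam / 2 * ((∑ i, u i ^ 2) + ∑ i, v i ^ 2) + G (fun i => u i * v i))) =
        exp (-(a * (∑ i, u i ^ 2 + ∑ i, v i ^ 2))) * exp (-β * G (fun i => u i * v i)) :=
    fun u v => by rw [← exp_add, ha_def]; ring_nf
  have hρ : ∀ x : ι → ℝ, exp (-β * (lam * ∑ i, |x i| + G x)) =
      exp (-(2 * a * ∑ i, |x i|)) * exp (-β * G x) :=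
    fun x => by rw [← exp_add, ha_def]; ring_nf
  simp_rw [hπ, hρ]
  convert setIntegral_hadamardDensity_comp_mul (a := a) (F := fun x => F x * exp (-β * G x))
    (by positivity) (by fun_prop) using 3 with p
  · ring
  · ext x
    ring

theorem hadamard_reparameterization_general (d : ℕ) (β lam : ℝ) (hβ : 0 < β) (hlam : 0 < lam)
    (G : (Fin d → ℝ) → ℝ) (hG : Measurable G)
    (Z Zπ : ℝ)
    (hZ : Z = ∫ x : Fin d → ℝ, Real.exp (-β * (lam * ∑ i, |x i| + G x)))
    (hZπ : Zπ = ∫ p in {p : (Fin d → ℝ) × (Fin d → ℝ) | ∀ i, 0 < p.1 i},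
        (∏ i, p.1 i) *
          Real.exp (-β * (lam / 2 * ((∑ i, p.1 i ^ 2) + ∑ i, p.2 i ^ 2) +
            G (fun i => p.1 i * p.2 i))))
    (φ : (Fin d → ℝ) → ℝ) (hφm : Measurable φ) :
    (∫ p in {p : (Fin d → ℝ) × (Fin d → ℝ) | ∀ i, 0 < p.1 i},
        φ (fun i => p.1 i * p.2 i) *
          ((1 / Zπ) * (∏ i, p.1 i) *
            Real.exp (-β * (lam / 2 * ((∑ i, p.1 i ^ 2) + ∑ i, p.2 i ^ 2) +
              G (fun i => p.1 i * p.2 i)))))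
      = ∫ x : Fin d → ℝ, φ x * ((1 / Z) * Real.exp (-β * (lam * ∑ i, |x i| + G x))) := by
  have hZπ_eq : Zπ = (√(π / (β * lam / 2)) / 2) ^ d * Z := by
    simpa only [hZπ, hZ, one_mul, Fintype.card_fin] using
      setIntegral_tiltedHadamardDensity_comp_mul (F := fun _ => 1) hβ hlam hG measurable_const
  simp_rw [mul_assoc (1 / Zπ), mul_left_comm (φ _) (1 / Zπ), mul_left_comm (φ _) (1 / Z),
    integral_const_mul, setIntegral_tiltedHadamardDensity_comp_mul hβ hlam hG hφm,
    Fintype.card_fin, hZπ_eq]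
  field_simp

/-- Hadamard reparameterization: if (u,v) ∼ π then u ⊙ v ∼ ρ. -/
theorem hadamard_reparameterization (d : ℕ) (β lam : ℝ) (hβ : 0 < β) (hlam : 0 < lam)
    (G : (Fin d → ℝ) → ℝ) (hG : Measurable G) (C : ℝ) (hGb : ∀ x, C ≤ G x)
    (Z Zπ : ℝ)
    (hZ : Z = ∫ x : Fin d → ℝ, Real.exp (-β * (lam * ∑ i, |x i| + G x)))
    (hZπ : Zπ = ∫ p in {p : (Fin d → ℝ) × (Fin d → ℝ) | ∀ i, 0 < p.1 i},
        (∏ i, p.1 i) *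
          Real.exp (-β * (lam / 2 * ((∑ i, p.1 i ^ 2) + ∑ i, p.2 i ^ 2) +
            G (fun i => p.1 i * p.2 i))))
    (φ : (Fin d → ℝ) → ℝ) (hφm : Measurable φ) (M : ℝ) (hφb : ∀ x, |φ x| ≤ M) :
    (∫ p in {p : (Fin d → ℝ) × (Fin d → ℝ) | ∀ i, 0 < p.1 i},
        φ (fun i => p.1 i * p.2 i) *
          ((1 / Zπ) * (∏ i, p.1 i) *
            Real.exp (-β * (lam / 2 * ((∑ i, p.1 i ^ 2) + ∑ i, p.2 i ^ 2) +
              G (fun i => p.1 i * p.2 i)))))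
      = ∫ x : Fin d → ℝ, φ x * ((1 / Z) * Real.exp (-β * (lam * ∑ i, |x i| + G x))) :=
  hadamard_reparameterization_general d β lam hβ hlam G hG Z Zπ hZ hZπ φ hφm
end

section
/- Let λ, β > 0, d ∈ ℕ, and let G : ℝᵈ → ℝ be C¹ with ‖∇G‖_∞ ≤ B and xᵀ∇G(x) ≥ -K for all x. If Δt < λ/B², then the implicit-explicit scheme (1+λΔt)u^{k+1} - Δt/(β u^{k+1}) = uᵏ - Δt vᵏ⊙∇G(uᵏ⊙vᵏ) + √(2/β) ΔW¹ₖ, (1+λΔt)v^{k+1} = vᵏ - Δt uᵏ⊙∇G(uᵏ⊙vᵏ) + √(2/β) ΔW²ₖ (with ΔWⁱₖ ∼ N(0, Δt·Id_d) independent of the past) satisfies the drift condition E[V(x^{k+1}) | xᵏ] ≤ α V(xᵏ) + R with V(u,v) = 1 + ‖(u,v)‖², α = (1 + Δt²B²)/(1 + λΔt)² < 1, and R = (1-α) + 4KΔt/(1+λΔt)² + (4(1+Δtλ)d + 4d)Δt/(β(1+λΔt)²). -/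
/-! Write `c = 1 + λΔt`, `δ = Δt/β`, `s = √(2/β)`, and `a, b` for the explicit parts of the two
updates. Multiplying the implicit equation `c U - δ/U = a + s W₁` by `U` and applying AM–GM gives
`c² U² ≤ (a + s W₁)² + 2cδ`, while `c V = b + s W₂` exactly, so in expectation each coordinate
contributes `a² + b² + 2 s² Δt + 2cδ` over `c²`. In the data term the cross terms combine to
`-4Δt ∑ uᵢ vᵢ ∂ᵢG(u ⊙ v) ≤ 4KΔt`, leaving `|a|² + |b|² ≤ (1 + Δt²B²)(|u|² + |v|²) + 4KΔt`; finally
`Δt B² < λ` is exactly what makes `1 + Δt²B² < c²`. -/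

open MeasureTheory ProbabilityTheory
open scoped NNReal

namespace ProbabilityTheory

lemma integral_sq_gaussianReal (m : ℝ) (v : ℝ≥0) :
    ∫ x, x ^ 2 ∂gaussianReal m v = m ^ 2 + v := by
  have h := variance_eq_sub (memLp_id_gaussianReal (μ := m) (v := v) 2)
  rw [variance_id_gaussianReal] at h
  simp only [id, Pi.pow_apply, integral_id_gaussianReal] at h
  linarith

variable {Ω : Type*} {mΩ : MeasurableSpace Ω} {P : Measure Ω} {X : Ω → ℝ} {m : ℝ} {v : ℝ≥0}

lemma hasLaw_of_map_eq {μ : Measure ℝ} [IsProbabilityMeasure μ] (h : P.map X = μ) :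
    HasLaw X μ P :=
  ⟨.of_map_ne_zero (h ▸ IsProbabilityMeasure.ne_zero μ), h⟩

lemma HasLaw.integrable_sq_of_gaussianReal (hX : HasLaw X (gaussianReal m v) P) :
    Integrable (fun ω ↦ X ω ^ 2) P := by
  have h : Integrable (fun x : ℝ ↦ x ^ 2) (P.map X) := by
    rw [hX.map_eq]; exact (memLp_id_gaussianReal 2).integrable_sq
  exact (integrable_map_measure (by fun_prop) hX.aemeasurable).1 h

lemma HasLaw.integral_sq_of_gaussianReal (hX : HasLaw X (gaussianReal m v) P) :
    ∫ ω, X ω ^ 2 ∂P = m ^ 2 + v :=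
  (hX.integral_comp (f := fun x : ℝ ↦ x ^ 2) (by fun_prop)).trans (integral_sq_gaussianReal m v)

lemma HasLaw.integrable_affine_sq_of_gaussianReal (hX : HasLaw X (gaussianReal m v) P)
    (a s : ℝ) : Integrable (fun ω ↦ (a + s * X ω) ^ 2) P :=
  (gaussianReal_const_add (gaussianReal_const_mul hX s) a).integrable_sq_of_gaussianReal

lemma HasLaw.integral_affine_sq_of_gaussianReal (hX : HasLaw X (gaussianReal m v) P)
    (a s : ℝ) : ∫ ω, (a + s * X ω) ^ 2 ∂P = (s * m + a) ^ 2 + s ^ 2 * v := by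
  rw [(gaussianReal_const_add (gaussianReal_const_mul hX s) a).integral_sq_of_gaussianReal]
  simp

end ProbabilityTheory

open Finset

lemma sq_mul_sq_le_of_mul_sub_div_eq {c δ x y : ℝ} (hx : x ≠ 0) (h : c * x - δ / x = y) :
    c ^ 2 * x ^ 2 ≤ y ^ 2 + 2 * c * δ := by
  have hxy : c * x ^ 2 - δ = y * x := by rw [← h]; field_simp
  have hcx : c ^ 2 * x ^ 2 = c * (y * x) + c * δ := by linear_combination c * hxy
  nlinarith [sq_nonneg (y - c * x)]

lemma sum_sq_gradient_step_le {ι : Type*} [Fintype ι] {u v g : ι → ℝ} {h B K : ℝ}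
    (hh : 0 ≤ h) (hg : ∀ i, |g i| ≤ B) (hK : -K ≤ ∑ i, u i * v i * g i) :
    ∑ i, ((u i - h * (v i * g i)) ^ 2 + (v i - h * (u i * g i)) ^ 2)
      ≤ (1 + h ^ 2 * B ^ 2) * ∑ i, (u i ^ 2 + v i ^ 2) + 4 * K * h := by
  have hpt : ∀ i, (u i - h * (v i * g i)) ^ 2 + (v i - h * (u i * g i)) ^ 2
      ≤ (1 + h ^ 2 * B ^ 2) * (u i ^ 2 + v i ^ 2) - 4 * h * (u i * v i * g i) := by
    intro i
    have hgB : g i ^ 2 ≤ B ^ 2 := sq_le_sq' (abs_le.1 (hg i)).1 (abs_le.1 (hg i)).2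
    have := mul_le_mul_of_nonneg_left hgB (mul_nonneg (sq_nonneg h)
      (add_nonneg (sq_nonneg (u i)) (sq_nonneg (v i))))
    linear_combination this
  calc _ ≤ ∑ i, ((1 + h ^ 2 * B ^ 2) * (u i ^ 2 + v i ^ 2) - 4 * h * (u i * v i * g i)) :=
        sum_le_sum fun i _ ↦ hpt i
    _ = (1 + h ^ 2 * B ^ 2) * ∑ i, (u i ^ 2 + v i ^ 2) - 4 * h * ∑ i, u i * v i * g i := by
        rw [sum_sub_distrib, ← mul_sum, ← mul_sum]
    _ ≤ _ := by nlinarith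

lemma mul_sq_lt_of_lt_div_sq {lam h B : ℝ} (hh : 0 < h) (hstep : h < lam / B ^ 2) :
    h * B ^ 2 < lam := by
  rcases (sq_nonneg B).eq_or_lt with hB | hB
  · rw [← hB, div_zero] at hstep; linarith
  · exact (lt_div_iff₀ hB).1 hstep

lemma one_add_sq_mul_sq_lt_sq {lam h B : ℝ} (hh : 0 < h) (hB : h * B ^ 2 < lam) :
    1 + h ^ 2 * B ^ 2 < (1 + lam * h) ^ 2 := by
  have hlam : 0 < lam := (mul_nonneg hh.le (sq_nonneg B)).trans_lt hB
  nlinarith [mul_lt_mul_of_pos_left hB hh, mul_pos hlam hh]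

lemma integral_one_add_sum_sq_le {Ω ι : Type*} {mΩ : MeasurableSpace Ω} {P : Measure Ω}
    [IsProbabilityMeasure P] [Fintype ι] {U V W₁ W₂ : Ω → ι → ℝ} {a b : ι → ℝ} {c δ s : ℝ}
    {v : ℝ≥0} (hc : c ≠ 0)
    (hW₁ : ∀ i, HasLaw (fun ω ↦ W₁ ω i) (gaussianReal 0 v) P)
    (hW₂ : ∀ i, HasLaw (fun ω ↦ W₂ ω i) (gaussianReal 0 v) P)
    (hU : ∀ ω i, U ω i ≠ 0)
    (hU_eq : ∀ ω i, c * U ω i - δ / U ω i = a i + s * W₁ ω i)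
    (hV_eq : ∀ ω i, c * V ω i = b i + s * W₂ ω i) :
    ∫ ω, (1 + ∑ i, U ω i ^ 2 + ∑ i, V ω i ^ 2) ∂P
      ≤ 1 + (∑ i, (a i ^ 2 + b i ^ 2) + Fintype.card ι * (2 * s ^ 2 * v + 2 * c * δ)) / c ^ 2 := by
  set F : ι → Ω → ℝ := fun i ω ↦ (a i + s * W₁ ω i) ^ 2 + (b i + s * W₂ ω i) ^ 2 + 2 * c * δ
  have h₁ i := (hW₁ i).integrable_affine_sq_of_gaussianReal (a i) s
  have h₂ i := (hW₂ i).integrable_affine_sq_of_gaussianReal (b i) s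
  have hF_int : ∀ i, Integrable (F i) P := fun i ↦
    ((h₁ i).fun_add (h₂ i)).fun_add (integrable_const _)
  have hF_eq : ∀ i, ∫ ω, F i ω ∂P = a i ^ 2 + b i ^ 2 + (2 * s ^ 2 * v + 2 * c * δ) := by
    intro i
    rw [integral_add ((h₁ i).fun_add (h₂ i)) (integrable_const _), integral_add (h₁ i) (h₂ i),
      (hW₁ i).integral_affine_sq_of_gaussianReal, (hW₂ i).integral_affine_sq_of_gaussianReal]
    simp only [mul_zero, zero_add, integral_const, probReal_univ, smul_eq_mul, one_mul]
    ring
  have hpt : ∀ ω, 1 + ∑ i, U ω i ^ 2 + ∑ i, V ω i ^ 2 ≤ 1 + (∑ i, F i ω) / c ^ 2 := by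
    intro ω
    rw [add_assoc, add_le_add_iff_left, ← sum_add_distrib, sum_div]
    gcongr with i
    rw [le_div_iff₀ (by positivity)]
    have hV : c ^ 2 * V ω i ^ 2 = (b i + s * W₂ ω i) ^ 2 := by rw [← hV_eq]; ring
    linarith [sq_mul_sq_le_of_mul_sub_div_eq (hU ω i) (hU_eq ω i)]
  have hF_sum_int : Integrable (fun ω ↦ (∑ i, F i ω) / c ^ 2) P :=
    (integrable_finsetSum _ fun i _ ↦ hF_int i).div_const _
  calc _ ≤ ∫ ω, (1 + (∑ i, F i ω) / c ^ 2) ∂P :=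
        integral_mono_of_nonneg (ae_of_all _ fun ω ↦ by positivity)
          ((integrable_const _).add hF_sum_int) (ae_of_all _ hpt)
    _ = _ := by
        rw [integral_add (integrable_const _) hF_sum_int, integral_div,
          integral_finsetSum _ fun i _ ↦ hF_int i]
        simp only [hF_eq, integral_const, sum_add_distrib, sum_const, card_univ, nsmul_eq_mul]
        simp [mul_add]

theorem discrete_drift_condition_general {Ωs : Type*} [MeasureSpace Ωs]
    [IsProbabilityMeasure (ℙ : Measure Ωs)]
    (d : ℕ) (lam β Δt B K : ℝ) (hβ : 0 < β) (hΔt : 0 < Δt)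
    (hstep : Δt < lam / B ^ 2)
    (G' : (Fin d → ℝ) → Fin d → ℝ)
    (hGB : ∀ x i, |G' x i| ≤ B)
    (hGK : ∀ x, -K ≤ ∑ i, x i * G' x i)
    (u v : Fin d → ℝ)
    (W1 W2 : Ωs → Fin d → ℝ)
    (hlaw1 : ∀ i, Measure.map (fun ω => W1 ω i) ℙ = gaussianReal 0 Δt.toNNReal)
    (hlaw2 : ∀ i, Measure.map (fun ω => W2 ω i) ℙ = gaussianReal 0 Δt.toNNReal)
    (U V : Ωs → Fin d → ℝ) (hU : ∀ ω i, 0 < U ω i)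
    (heq1 : ∀ ω i, (1 + lam * Δt) * U ω i - Δt / (β * U ω i)
      = u i - Δt * (v i * G' (fun j => u j * v j) i) + Real.sqrt (2 / β) * W1 ω i)
    (heq2 : ∀ ω i, (1 + lam * Δt) * V ω i
      = v i - Δt * (u i * G' (fun j => u j * v j) i) + Real.sqrt (2 / β) * W2 ω i) :
    (1 + Δt ^ 2 * B ^ 2) / (1 + lam * Δt) ^ 2 < 1 ∧
      (∫ ω, (1 + (∑ i, U ω i ^ 2) + ∑ i, V ω i ^ 2)) ≤
        ((1 + Δt ^ 2 * B ^ 2) / (1 + lam * Δt) ^ 2) *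
            (1 + (∑ i, u i ^ 2) + ∑ i, v i ^ 2)
          + ((1 - (1 + Δt ^ 2 * B ^ 2) / (1 + lam * Δt) ^ 2)
            + 4 * K * Δt / (1 + lam * Δt) ^ 2
            + (4 * (1 + Δt * lam) * d + 4 * d) / (β * (1 + lam * Δt) ^ 2) * Δt) := by
  have hBΔt := mul_sq_lt_of_lt_div_sq hΔt hstep
  have hc : 0 < 1 + lam * Δt := by nlinarith [(mul_nonneg hΔt.le (sq_nonneg B)).trans_lt hBΔt]
  refine ⟨(div_lt_one (by positivity)).2 (one_add_sq_mul_sq_lt_sq hΔt hBΔt), ?_⟩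
  have hnoise := integral_one_add_sum_sq_le (δ := Δt / β) hc.ne'
    (fun i ↦ hasLaw_of_map_eq (hlaw1 i)) (fun i ↦ hasLaw_of_map_eq (hlaw2 i))
    (fun ω i ↦ (hU ω i).ne') (fun ω i ↦ by rw [div_div, heq1]) heq2
  have hdata := sum_sq_gradient_step_le hΔt.le (hGB (fun j ↦ u j * v j)) (hGK _)
  rw [Real.coe_toNNReal _ hΔt.le, Real.sq_sqrt (by positivity), Fintype.card_fin] at hnoise
  have hcd : 0 ≤ d * (1 + lam * Δt) * Δt / β := by positivity
  refine hnoise.trans ?_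
  calc _ ≤ 1 + ((1 + Δt ^ 2 * B ^ 2) * ∑ i, (u i ^ 2 + v i ^ 2) + 4 * K * Δt
          + d * (4 + 4 * (1 + lam * Δt)) * Δt / β) / (1 + lam * Δt) ^ 2 := by
        gcongr 1 + ?_ / _
        linear_combination hdata + 2 * hcd
    _ = _ := by rw [sum_add_distrib]; field_simp; ring

/-- Drift (Lyapunov) condition for one step of the implicit-explicit scheme:
conditioning on the current state (u,v) (so it is deterministic and the noise
increments are fresh Gaussians), E[V(x^{k+1})] ≤ α V(xᵏ) + R and α < 1. -/
theorem discrete_drift_condition {Ωs : Type*} [MeasureSpace Ωs]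
    [IsProbabilityMeasure (ℙ : Measure Ωs)]
    (d : ℕ) (lam β Δt B K : ℝ) (hlam : 0 < lam) (hβ : 0 < β) (hΔt : 0 < Δt)
    (hB : 0 ≤ B) (hstep : Δt < lam / B ^ 2)
    (G : (Fin d → ℝ) → ℝ) (G' : (Fin d → ℝ) → Fin d → ℝ)
    (hGdiff : ∀ x, HasFDerivAt G
      (∑ i, G' x i • (ContinuousLinearMap.proj i : (Fin d → ℝ) →L[ℝ] ℝ)) x)
    (hGB : ∀ x i, |G' x i| ≤ B)
    (hGK : ∀ x, -K ≤ ∑ i, x i * G' x i)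
    (u v : Fin d → ℝ) (hu : ∀ i, 0 < u i)
    (W1 W2 : Ωs → Fin d → ℝ)
    (hmeas1 : ∀ i, Measurable fun ω => W1 ω i)
    (hmeas2 : ∀ i, Measurable fun ω => W2 ω i)
    (hlaw1 : ∀ i, Measure.map (fun ω => W1 ω i) ℙ = gaussianReal 0 Δt.toNNReal)
    (hlaw2 : ∀ i, Measure.map (fun ω => W2 ω i) ℙ = gaussianReal 0 Δt.toNNReal)
    (hindep : iIndepFun
      (fun j : Fin d ⊕ Fin d =>
        Sum.elim (fun i ω => W1 ω i) (fun i ω => W2 ω i) j) ℙ)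
    (U V : Ωs → Fin d → ℝ) (hU : ∀ ω i, 0 < U ω i)
    (heq1 : ∀ ω i, (1 + lam * Δt) * U ω i - Δt / (β * U ω i)
      = u i - Δt * (v i * G' (fun j => u j * v j) i) + Real.sqrt (2 / β) * W1 ω i)
    (heq2 : ∀ ω i, (1 + lam * Δt) * V ω i
      = v i - Δt * (u i * G' (fun j => u j * v j) i) + Real.sqrt (2 / β) * W2 ω i) :
    (1 + Δt ^ 2 * B ^ 2) / (1 + lam * Δt) ^ 2 < 1 ∧
      (∫ ω, (1 + (∑ i, U ω i ^ 2) + ∑ i, V ω i ^ 2)) ≤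
        ((1 + Δt ^ 2 * B ^ 2) / (1 + lam * Δt) ^ 2) *
            (1 + (∑ i, u i ^ 2) + ∑ i, v i ^ 2)
          + ((1 - (1 + Δt ^ 2 * B ^ 2) / (1 + lam * Δt) ^ 2)
            + 4 * K * Δt / (1 + lam * Δt) ^ 2
            + (4 * (1 + Δt * lam) * d + 4 * d) / (β * (1 + lam * Δt) ^ 2) * Δt) :=
  discrete_drift_condition_general d lam β Δt B K hβ hΔt hstep G' hGB hGK u v W1 W2 hlaw1 hlaw2 U V
    hU heq1 heq2
end
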